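/- arXiv:2312.05156 — 7 statements merged into one kernel-verified Lean document; each statement's English description precedes it below -/
import Mathlib

section
/- Let f : X × U × W → X and h : X → Y describe the system x_{t+1} = f(x_t, u_t, w_t), y_t = h(x_t). For any fixed input sequence u_0,...,u_t and measurement sequence y_0,...,y_t, the worst-case history functions ρ (with values in ℝ ∪ {-∞}, and with the convention that the supremum over the empty set is -∞) satisfy the forward dynamic-programming recursion ρ_{t+1}(x, y_{0:t}, u_{0:t}) = sup over ξ ∈ X and w ∈ W of { l(ξ, u_t, w) + ρ_t(ξ, y_{0:t-1}, u_{0:t-1}) : x = f(ξ, u_t, w) and y_t = h(ξ) }. -/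
open scoped BigOperators

noncomputable section

variable {X U W Y : Type*}

/-- The worst-case history `ρ_t(x, y_{0:t-1}, u_{0:t-1})`: the supremum (in `ℝ ∪ {-∞}`,
with `sSup ∅ = ⊥`) of accumulated stage costs over all disturbance sequences and initial
states whose trajectory reaches `x` at time `t` and is consistent with the measurements. -/
noncomputable def rho (f : X → U → W → X) (h : X → Y) (l : X → U → W → ℝ)
    (t : ℕ) (x : X) (ys : ℕ → Y) (us : ℕ → U) : EReal :=
  sSup { c : EReal | ∃ (xs : ℕ → X) (ws : ℕ → W),
    xs t = x ∧
    (∀ τ < t, xs (τ + 1) = f (xs τ) (us τ) (ws τ)) ∧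
    (∀ τ < t, h (xs τ) = ys τ) ∧
    c = ((∑ τ ∈ Finset.range t, l (xs τ) (us τ) (ws τ) : ℝ) : EReal) }

/-- Inputs generated causally by a strategy `π` from a measurement sequence:
`u_t = μ_t(y_{0:t}, u_{0:t-1})`. -/
noncomputable def inputsOf (π : ℕ → List Y → List U → U) (ys : ℕ → Y) : ℕ → U
  | t => π t ((List.range (t + 1)).map ys) (List.ofFn fun i : Fin t => inputsOf π ys i)
  decreasing_by exact i.isLt

/-- Closed loop: state, list of past measurements and list of past inputs. -/
noncomputable def loop (f : X → U → W → X) (h : X → Y)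
    (π : ℕ → List Y → List U → U) (x0 : X) (ws : ℕ → W) : ℕ → X × List Y × List U
  | 0 => (x0, [h x0], [])
  | t + 1 =>
    let p := loop f h π x0 ws t
    let u := π t p.2.1 p.2.2
    let x' := f p.1 u (ws t)
    (x', p.2.1 ++ [h x'], p.2.2 ++ [u])

/-- Closed-loop state `x_t`. -/
noncomputable def cstate (f : X → U → W → X) (h : X → Y)
    (π : ℕ → List Y → List U → U) (x0 : X) (ws : ℕ → W) (t : ℕ) : X :=
  (loop f h π x0 ws t).1

/-- Closed-loop input `u_t = μ_t(y_{0:t}, u_{0:t-1})`. -/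
noncomputable def cinput (f : X → U → W → X) (h : X → Y)
    (π : ℕ → List Y → List U → U) (x0 : X) (ws : ℕ → W) (t : ℕ) : U :=
  π t (loop f h π x0 ws t).2.1 (loop f h π x0 ws t).2.2

/-- The worst-case `N`-horizon performance `J_π^N(y_0)`. -/
noncomputable def Jcost (f : X → U → W → X) (h : X → Y) (l : X → U → W → ℝ)
    (π : ℕ → List Y → List U → U) (N : ℕ) (y0 : Y) : EReal :=
  sSup { c : EReal | ∃ (x0 : X) (ws : ℕ → W), h x0 = y0 ∧
    c = ((∑ t ∈ Finset.range (N + 1),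
      l (cstate f h π x0 ws t) (cinput f h π x0 ws t) (ws t) : ℝ) : EReal) }

/-- The information-state update `g` (componentwise), for preimages of `h`
enumerated by `ξ : Y → Fin M → X`. -/
noncomputable def gup {M : ℕ} (f : X → U → W → X) (l : X → U → W → ℝ)
    (ξ : Y → Fin M → X) (r : Fin M → EReal) (ynext y : Y) (u : U) : Fin M → EReal :=
  fun i => sSup { c : EReal | ∃ (j : Fin M) (w : W),
    ξ ynext i = f (ξ y j) u w ∧ c = (l (ξ y j) u w : EReal) + r j }

/-- The information state `r_t`, defined recursively by `r_0 = 0` and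
`r_t = g(r_{t-1}, y_t, y_{t-1}, u_{t-1})`. -/
noncomputable def rvec {M : ℕ} (f : X → U → W → X) (l : X → U → W → ℝ)
    (ξ : Y → Fin M → X) (ys : ℕ → Y) (us : ℕ → U) : ℕ → Fin M → EReal
  | 0 => 0
  | t + 1 => gup f l ξ (rvec f l ξ ys us t) (ys (t + 1)) (ys t) (us t)

/-- The Bellman operator `B_u V(r, y) = sup_{v ∈ Y} V(g(r, v, y, u), v)`. -/
noncomputable def Bu {M : ℕ} (f : X → U → W → X) (l : X → U → W → ℝ)
    (ξ : Y → Fin M → X) (V : (Fin M → EReal) → Y → EReal) (u : U)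
    (r : Fin M → EReal) (y : Y) : EReal :=
  ⨆ v : Y, V (gup f l ξ r v y u) v

/-- The Bellman operator `B V(r, y) = inf_{u ∈ U} B_u V(r, y)`. -/
noncomputable def Bop {M : ℕ} (f : X → U → W → X) (l : X → U → W → ℝ)
    (ξ : Y → Fin M → X) (V : (Fin M → EReal) → Y → EReal)
    (r : Fin M → EReal) (y : Y) : EReal :=
  ⨅ u : U, Bu f l ξ V u r y

/-- The value iteration `V_0(r, y) = max_i r^i`, `V_{k+1} = B V_k`. -/
noncomputable def Vseq {M : ℕ} (f : X → U → W → X) (l : X → U → W → ℝ)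
    (ξ : Y → Fin M → X) : ℕ → (Fin M → EReal) → Y → EReal
  | 0 => fun r _ => ⨆ i, r i
  | k + 1 => fun r y => Bop f l ξ (Vseq f l ξ k) r y

/-- The (possibly time-varying) information-state feedback policy
`μ_t(y_{0:t}, u_{0:t-1}) = η_t(r_t, y_t)`, where `r_0 = 0` and
`r_{t+1} = g(r_t, y_{t+1}, y_t, u_t)`. -/
noncomputable def infoStrategyT {M : ℕ} [Nonempty Y] [Nonempty U]
    (f : X → U → W → X) (l : X → U → W → ℝ) (ξ : Y → Fin M → X)
    (η : ℕ → (Fin M → EReal) → Y → U) : ℕ → List Y → List U → U :=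
  fun t ysl usl =>
    η t (rvec f l ξ (fun τ => ysl.getD τ (Classical.arbitrary Y))
          (fun τ => usl.getD τ (Classical.arbitrary U)) (ysl.length - 1))
      (ysl.getD (ysl.length - 1) (Classical.arbitrary Y))

/-- Stationary information-state feedback policy `μ_t(y_{0:t}, u_{0:t-1}) = η(r_t, y_t)`. -/
noncomputable def infoStrategy {M : ℕ} [Nonempty Y] [Nonempty U]
    (f : X → U → W → X) (l : X → U → W → ℝ) (ξ : Y → Fin M → X)
    (η : (Fin M → EReal) → Y → U) : ℕ → List Y → List U → U :=
  infoStrategyT f l ξ (fun _ => η)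

end

/-- The worst-case history satisfies the forward dynamic-programming
recursion `ρ_{t+1}(x, y_{0:t}, u_{0:t}) = sup { l(ξ, u_t, w) + ρ_t(ξ, y_{0:t-1}, u_{0:t-1}) :
ξ ∈ X, w ∈ W, x = f(ξ, u_t, w), y_t = h(ξ) }`. -/
theorem rho_forward_recursion {X U W Y : Type*} [Nonempty X] [Nonempty U] [Nonempty W]
    [Nonempty Y] (f : X → U → W → X) (h : X → Y) (hsurj : Function.Surjective h)
    (l : X → U → W → ℝ) (t : ℕ) (x : X) (ys : ℕ → Y) (us : ℕ → U) :
    rho f h l (t + 1) x ys us =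
      sSup { c : EReal | ∃ (ξ : X) (w : W),
        x = f ξ (us t) w ∧ ys t = h ξ ∧
        c = (l ξ (us t) w : EReal) + rho f h l t ξ ys us } := by
  apply le_antisymm
  · apply sSup_le
    rintro c ⟨xs, ws, hxt, hdyn, hmeas, rfl⟩
    have hmem : ((l (xs t) (us t) (ws t) : EReal) + rho f h l t (xs t) ys us) ∈
        { c : EReal | ∃ (ξ : X) (w : W),
          x = f ξ (us t) w ∧ ys t = h ξ ∧
          c = (l ξ (us t) w : EReal) + rho f h l t ξ ys us } := by
      exact ⟨xs t, ws t, by rw [← hxt]; exact hdyn t (Nat.lt_succ_self t),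
        (hmeas t (Nat.lt_succ_self t)).symm, rfl⟩
    refine le_trans ?_ (le_sSup hmem)
    rw [Finset.sum_range_succ]
    push_cast
    rw [add_comm]
    gcongr
    apply le_sSup
    exact ⟨xs, ws, rfl, fun τ hτ => hdyn τ (hτ.trans (Nat.lt_succ_self t)),
      fun τ hτ => hmeas τ (hτ.trans (Nat.lt_succ_self t)), rfl⟩
  · apply sSup_le
    rintro c ⟨ξ, w, hx, hy, rfl⟩
    rw [add_comm, ← EReal.le_sub_iff_add_le (Or.inl (EReal.coe_ne_bot _))
      (Or.inl (EReal.coe_ne_top _))]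
    apply sSup_le
    rintro s ⟨xs, ws, hxt, hdyn, hmeas, rfl⟩
    rw [EReal.le_sub_iff_add_le (Or.inl (EReal.coe_ne_bot _)) (Or.inl (EReal.coe_ne_top _))]
    set xs' : ℕ → X := fun τ => if τ ≤ t then xs τ else x with hxs'
    set ws' : ℕ → W := Function.update ws t w with hws'
    have key : ((∑ τ ∈ Finset.range t, l (xs τ) (us τ) (ws τ) : ℝ) : EReal)
        + (l ξ (us t) w : EReal)
        = ((∑ τ ∈ Finset.range (t + 1), l (xs' τ) (us τ) (ws' τ) : ℝ) : EReal) := by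
      rw [Finset.sum_range_succ]
      have h1 : ∀ τ ∈ Finset.range t, l (xs' τ) (us τ) (ws' τ) = l (xs τ) (us τ) (ws τ) := by
        intro τ hτ
        rw [Finset.mem_range] at hτ
        simp [hxs', hws', hτ.le, Function.update_of_ne hτ.ne]
      rw [Finset.sum_congr rfl h1]
      have h2 : xs' t = ξ := by simp [hxs', hxt]
      have h3 : ws' t = w := by simp [hws']
      rw [h2, h3]
      push_cast
      ring
    rw [key]
    apply le_sSup
    refine ⟨xs', ws', by simp [hxs'], ?_, ?_, rfl⟩
    · intro τ hτ
      rcases Nat.lt_succ_iff_lt_or_eq.mp hτ with hτ | rfl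
      · have : τ + 1 ≤ t := hτ
        simp only [hxs', hws', if_pos this, if_pos hτ.le]
        rw [Function.update_of_ne hτ.ne]
        exact hdyn τ hτ
      · simp only [hxs', hws']
        rw [if_neg (by omega), if_pos le_rfl, Function.update_self, hxt, ← hx]
    · intro τ hτ
      rcases Nat.lt_succ_iff_lt_or_eq.mp hτ with hτ | rfl
      · simp only [hxs', if_pos hτ.le]; exact hmeas τ hτ
      · simp only [hxs', if_pos le_rfl, hxt, ← hy]
end

section
/- Let f : X × U × W → X and h : X → Y describe the system x_{t+1} = f(x_t, u_t, w_t), y_t = h(x_t), and let π be a causal control strategy generating u_t = μ_t(y_{0:t}, u_{0:t-1}). Then the worst-case N-horizon performance J_π^N(y_0) := sup over w_{0:N} ∈ W^{N+1} and x_0 with h(x_0) = y_0 of Σ_{t=0}^N l(x_t, u_t, w_t) equals the supremum over measurement sequences y_0,...,y_N (starting from the given y_0) and states x ∈ X of ρ_{N+1}(x, y_{0:N}, u_{0:N}), where the inputs u_{0:N} are generated by π from y_{0:N}. -/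
open scoped BigOperators

section Aux
variable {X U W Y : Type*}

lemma inputsOf_eq (π : ℕ → List Y → List U → U) (ys : ℕ → Y) (t : ℕ) :
    inputsOf π ys t = π t ((List.range (t + 1)).map ys)
      (List.ofFn fun i : Fin t => inputsOf π ys i) := by
  rw [inputsOf]

lemma inputsOf_congr (π : ℕ → List Y → List U → U) (ys ys' : ℕ → Y) :
    ∀ t, (∀ τ ≤ t, ys τ = ys' τ) → inputsOf π ys t = inputsOf π ys' t := by
  intro t
  induction t using Nat.strong_induction_on with
  | _ t IH =>
    intro hag
    rw [inputsOf, inputsOf]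
    congr 1
    · exact List.map_congr_left fun a ha =>
        hag a (Nat.lt_succ_iff.mp (List.mem_range.mp ha))
    · congr 1
      funext i
      exact IH i i.isLt (fun τ hτ => hag τ (le_trans hτ (le_of_lt i.isLt)))

lemma cstate_zero (f : X → U → W → X) (h : X → Y) (π : ℕ → List Y → List U → U)
    (x0 : X) (ws : ℕ → W) : cstate f h π x0 ws 0 = x0 := rfl

lemma cstate_succ (f : X → U → W → X) (h : X → Y) (π : ℕ → List Y → List U → U)
    (x0 : X) (ws : ℕ → W) (t : ℕ) :
    cstate f h π x0 ws (t + 1)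
      = f (cstate f h π x0 ws t) (cinput f h π x0 ws t) (ws t) := rfl

lemma loop_snd (f : X → U → W → X) (h : X → Y) (π : ℕ → List Y → List U → U)
    (x0 : X) (ws : ℕ → W) : ∀ t, (loop f h π x0 ws t).2 =
      ((List.range (t + 1)).map (fun τ => h (cstate f h π x0 ws τ)),
       List.ofFn fun i : Fin t => inputsOf π (fun τ => h (cstate f h π x0 ws τ)) i) := by
  intro t
  induction t with
  | zero => simp [loop, cstate, List.range_succ]
  | succ t IH =>
    have hu : π t (loop f h π x0 ws t).2.1 (loop f h π x0 ws t).2.2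
        = inputsOf π (fun τ => h (cstate f h π x0 ws τ)) t := by
      rw [IH, inputsOf_eq]
    show ((loop f h π x0 ws t).2.1 ++ [h (cstate f h π x0 ws (t+1))],
          (loop f h π x0 ws t).2.2 ++ [π t (loop f h π x0 ws t).2.1 (loop f h π x0 ws t).2.2]) = _
    rw [hu, IH]
    refine Prod.ext ?_ ?_
    · simp [List.range_succ]
    · rw [List.ofFn_succ']
      simp [Fin.last, List.concat_eq_append, Fin.castSucc, Fin.castAdd, Fin.castLE]

lemma cinput_eq (f : X → U → W → X) (h : X → Y) (π : ℕ → List Y → List U → U)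
    (x0 : X) (ws : ℕ → W) (t : ℕ) :
    cinput f h π x0 ws t = inputsOf π (fun τ => h (cstate f h π x0 ws τ)) t := by
  unfold cinput
  rw [show (loop f h π x0 ws t).2.1 = ((loop f h π x0 ws t).2).1 from rfl,
    show (loop f h π x0 ws t).2.2 = ((loop f h π x0 ws t).2).2 from rfl,
    loop_snd, inputsOf_eq]

/-- Reconstruction lemma: if `xs` follows the dynamics driven by `inputsOf π ys`
and its measurements match `ys` up to time `T`, then the closed loop from `xs 0`
reproduces `xs`. -/
lemma cstate_reconstruct (f : X → U → W → X) (h : X → Y) (π : ℕ → List Y → List U → U)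
    (ws : ℕ → W) (xs : ℕ → X) (ys : ℕ → Y) (T : ℕ)
    (hdyn : ∀ τ < T, xs (τ + 1) = f (xs τ) (inputsOf π ys τ) (ws τ))
    (hmeas : ∀ τ < T, h (xs τ) = ys τ) :
    ∀ t ≤ T, cstate f h π (xs 0) ws t = xs t := by
  intro t
  induction t using Nat.strong_induction_on with
  | _ t IH =>
    intro ht
    match t with
    | 0 => rfl
    | t + 1 =>
      have hlt : t < T := lt_of_lt_of_le (Nat.lt_succ_self t) ht
      rw [cstate_succ, cinput_eq]
      have hcong : inputsOf π (fun τ => h (cstate f h π (xs 0) ws τ)) t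
          = inputsOf π ys t := by
        apply inputsOf_congr
        intro τ hτ
        rw [IH τ (Nat.lt_succ_of_le hτ) (le_trans hτ (le_of_lt hlt)),
          hmeas τ (lt_of_le_of_lt hτ hlt)]
      rw [hcong, IH t (Nat.lt_succ_self t) (le_of_lt hlt), ← hdyn t hlt]

end Aux

/-- The worst-case `N`-horizon performance of a causal strategy `π`
equals the supremum over measurement sequences starting at `y_0` and states `x` of the
worst-case history `ρ_{N+1}(x, y_{0:N}, u_{0:N})`, where the inputs are generated by `π`
from the measurements. -/
theorem J_eq_sup_rho {X U W Y : Type*} [Nonempty X] [Nonempty U] [Nonempty W] [Nonempty Y]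
    (f : X → U → W → X) (h : X → Y) (hsurj : Function.Surjective h)
    (l : X → U → W → ℝ) (π : ℕ → List Y → List U → U) (N : ℕ) (y0 : Y) :
    Jcost f h l π N y0 =
      sSup { c : EReal | ∃ (ys : ℕ → Y) (x : X), ys 0 = y0 ∧
        c = rho f h l (N + 1) x ys (inputsOf π ys) } := by
  apply le_antisymm
  · apply sSup_le
    rintro c ⟨x0, ws, hx0, rfl⟩
    set ys : ℕ → Y := fun τ => h (cstate f h π x0 ws τ) with hys
    refine le_trans (le_sSup ?_)
      (le_sSup ⟨ys, cstate f h π x0 ws (N + 1), hx0, rfl⟩)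
    refine ⟨cstate f h π x0 ws, ws, rfl, ?_, fun τ _ => rfl, ?_⟩
    · intro τ _
      rw [cstate_succ, cinput_eq]
    · congr 1
      exact Finset.sum_congr rfl fun τ _ => by rw [cinput_eq]
  · apply sSup_le
    rintro c ⟨ys, x, hy0, rfl⟩
    apply sSup_le
    rintro c' ⟨xs, ws, hxN, hdyn, hmeas, rfl⟩
    apply le_sSup
    refine ⟨xs 0, ws, by rw [hmeas 0 (Nat.succ_pos N), hy0], ?_⟩
    have hst : ∀ σ ≤ N + 1, cstate f h π (xs 0) ws σ = xs σ :=
      cstate_reconstruct f h π ws xs ys (N + 1) hdyn hmeas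
    congr 1
    apply Finset.sum_congr rfl
    intro τ hτ
    have hτN : τ < N + 1 := Finset.mem_range.mp hτ
    rw [hst τ (le_of_lt hτN), cinput_eq]
    have : inputsOf π (fun σ => h (cstate f h π (xs 0) ws σ)) τ = inputsOf π ys τ := by
      apply inputsOf_congr
      intro σ hσ
      rw [hst σ (le_trans hσ (le_of_lt hτN)), hmeas σ (lt_of_le_of_lt hσ hτN)]
    rw [this]
end

section
/- Assume that for every x ∈ X and u ∈ U, sup_{w ∈ W} l(x, u, w) ≥ 0, and that for every y ∈ Y the preimage h^{-1}{y} ⊂ X is a finite indexed set of at most M elements. Fix N, an initial measurement y_0, a strategy π generating inputs u_t, and a measurement sequence y_1,...,y_N, and define r_N recursively by r_0 = 0 and r_t = g(r_{t-1}, y_t, y_{t-1}, u_{t-1}). Then for every t ≤ N and every x ∈ X, ρ_{t+1}(x, y_{0:t}, u_{0:t}) = sup over i ∈ {1,...,M} and w ∈ W of { l(ξ_t^i, u_t, w) + r_t^i : x = f(ξ_t^i, u_t, w) }, where (ξ_t^i)_{i=1}^M enumerates h^{-1}{y_t}. -/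
open scoped BigOperators

/-!
Splitting off the last step of a trajectory gives the dynamic-programming recursion
`ρ_{t+1}(x) = sup {l(x', u_t, w) + ρ_t(x') : h x' = y_t, x = f(x', u_t, w)}`.
Enumerating the fibre `h⁻¹{y_t}` by `ξ (ys t)` turns it into the recursion defining `r_t`,
so `r_t^i = ρ_t(ξ_t^i)` by induction from `r_0 = 0 = ρ_0`.
-/

lemma exists_mem_fiber_iff {ι X Y : Type*} {e : ι → X} {h : X → Y} {y : Y}
    (he : Set.range e = {x | h x = y}) {p : X → Prop} :
    (∃ x, h x = y ∧ p x) ↔ ∃ i, p (e i) := by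
  rw [← Set.exists_range_iff, he]
  rfl

section WorstCaseHistory

variable {X U W Y : Type*} (f : X → U → W → X) (h : X → Y) (l : X → U → W → ℝ)

lemma rho_zero [Nonempty W] (x : X) (ys : ℕ → Y) (us : ℕ → U) :
    rho f h l 0 x ys us = 0 := by
  refine le_antisymm (sSup_le ?_) (le_sSup ?_)
  · rintro _ ⟨xs, ws, -, -, -, rfl⟩
    simp
  · exact ⟨fun _ => x, fun _ => Classical.arbitrary W, rfl, by simp, by simp, by simp⟩

lemma rho_succ (t : ℕ) (x : X) (ys : ℕ → Y) (us : ℕ → U) :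
    rho f h l (t + 1) x ys us =
      sSup { c : EReal | ∃ x', h x' = ys t ∧ ∃ w, x = f x' (us t) w ∧
        c = (l x' (us t) w : EReal) + rho f h l t x' ys us } := by
  apply le_antisymm
  · refine sSup_le ?_
    rintro _ ⟨xs, ws, rfl, hdyn, hmeas, rfl⟩
    have hprefix : ((∑ τ ∈ Finset.range t, l (xs τ) (us τ) (ws τ) : ℝ) : EReal)
        ≤ rho f h l t (xs t) ys us :=
      le_sSup ⟨xs, ws, rfl, fun τ hτ => hdyn τ (by omega), fun τ hτ => hmeas τ (by omega), rfl⟩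
    refine le_sSup_of_le ⟨xs t, hmeas t t.lt_succ_self, ws t, hdyn t t.lt_succ_self, rfl⟩ ?_
    rw [Finset.sum_range_succ, EReal.coe_add, add_comm]
    gcongr
  · refine sSup_le ?_
    rintro _ ⟨x', hx', w, rfl, rfl⟩
    rw [add_comm]
    refine EReal.add_le_of_le_sub (sSup_le ?_)
    rintro _ ⟨xs, ws, rfl, hdyn, hmeas, rfl⟩
    rw [EReal.le_sub_iff_add_le (by simp) (by simp)]
    -- extend the trajectory ending at `x'` by the step `x' ↦ f x' (us t) w`
    set xs' := Function.update xs (t + 1) (f (xs t) (us t) w)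
    set ws' := Function.update ws t w
    have hxs' : ∀ τ ≤ t, xs' τ = xs τ := fun τ hτ => Function.update_of_ne (by omega) _ _
    have hws' : ∀ τ < t, ws' τ = ws τ := fun τ hτ => Function.update_of_ne (by omega) _ _
    have hxs'_succ : xs' (t + 1) = f (xs t) (us t) w := Function.update_self ..
    have hws'_self : ws' t = w := Function.update_self ..
    refine le_sSup ⟨xs', ws', hxs'_succ, fun τ hτ => ?_, fun τ hτ => ?_, ?_⟩
    · rcases Nat.lt_succ_iff_lt_or_eq.mp hτ with hτ | rfl
      · rw [hxs' _ hτ, hxs' _ hτ.le, hws' _ hτ, hdyn τ hτ]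
      · rw [hxs' τ le_rfl, hxs'_succ, hws'_self]
    · rcases Nat.lt_succ_iff_lt_or_eq.mp hτ with hτ | rfl
      · rw [hxs' τ hτ.le, hmeas τ hτ]
      · rw [hxs' τ le_rfl, hx']
    · rw [Finset.sum_range_succ, hxs' t le_rfl, hws'_self, EReal.coe_add]
      congr 2
      exact Finset.sum_congr rfl fun τ hτ => by
        rw [hxs' τ (Finset.mem_range.mp hτ).le, hws' τ (Finset.mem_range.mp hτ)]

variable {M : ℕ} (ξ : Y → Fin M → X)

lemma rho_succ_eq_sSup_fiber (hξ : ∀ y : Y, Set.range (ξ y) = {x : X | h x = y})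
    (t : ℕ) (x : X) (ys : ℕ → Y) (us : ℕ → U) :
    rho f h l (t + 1) x ys us =
      sSup { c : EReal | ∃ (i : Fin M) (w : W), x = f (ξ (ys t) i) (us t) w ∧
        c = (l (ξ (ys t) i) (us t) w : EReal) + rho f h l t (ξ (ys t) i) ys us } := by
  rw [rho_succ]
  congr 1
  ext c
  exact exists_mem_fiber_iff (hξ (ys t))

lemma rvec_eq_rho [Nonempty W] (hξ : ∀ y : Y, Set.range (ξ y) = {x : X | h x = y})
    (ys : ℕ → Y) (us : ℕ → U) (t : ℕ) :
    rvec f l ξ ys us t = fun i => rho f h l t (ξ (ys t) i) ys us := by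
  induction t with
  | zero => funext i; exact (rho_zero f h l _ ys us).symm
  | succ t ih => funext i; rw [rvec, ih, rho_succ_eq_sSup_fiber f h l ξ hξ]; rfl

end WorstCaseHistory

theorem rho_eq_sup_r_general {X U W Y : Type*} [Nonempty W]
    {M : ℕ} (f : X → U → W → X) (h : X → Y)
    (l : X → U → W → ℝ) (ξ : Y → Fin M → X)
    (hξ : ∀ y : Y, Set.range (ξ y) = {x : X | h x = y})
    (π : ℕ → List Y → List U → U) (ys : ℕ → Y)
    (t : ℕ) (x : X) :
    rho f h l (t + 1) x ys (inputsOf π ys) =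
      sSup { c : EReal | ∃ (i : Fin M) (w : W),
        x = f (ξ (ys t) i) (inputsOf π ys t) w ∧
        c = (l (ξ (ys t) i) (inputsOf π ys t) w : EReal)
            + rvec f l ξ ys (inputsOf π ys) t i } := by
  rw [rho_succ_eq_sSup_fiber f h l ξ hξ, rvec_eq_rho f h l ξ hξ]

/-- Under the positivity assumption on the stage cost and the
finite-preimage assumption (preimages of `h` enumerated by `ξ : Y → Fin M → X`), the
worst-case history along a measurement sequence `ys` with inputs generated by a strategy
`π` is determined by the finite-dimensional information state `r_t` (with `r_0 = 0`,
`r_t = g(r_{t-1}, y_t, y_{t-1}, u_{t-1})`):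
`ρ_{t+1}(x, y_{0:t}, u_{0:t}) = sup_{i, w} { l(ξ_t^i, u_t, w) + r_t^i : x = f(ξ_t^i, u_t, w) }`
for every `t ≤ N`. -/
theorem rho_eq_sup_r {X U W Y : Type*} [Nonempty X] [Nonempty U] [Nonempty W] [Nonempty Y]
    {M : ℕ} (f : X → U → W → X) (h : X → Y) (hsurj : Function.Surjective h)
    (l : X → U → W → ℝ) (ξ : Y → Fin M → X)
    (pos : ∀ (x : X) (u : U), (0 : EReal) ≤ ⨆ w : W, (l x u w : EReal))
    (hξ : ∀ y : Y, Set.range (ξ y) = {x : X | h x = y})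
    (π : ℕ → List Y → List U → U) (N : ℕ) (y0 : Y) (ys : ℕ → Y) (hy0 : ys 0 = y0)
    (t : ℕ) (ht : t ≤ N) (x : X) :
    rho f h l (t + 1) x ys (inputsOf π ys) =
      sSup { c : EReal | ∃ (i : Fin M) (w : W),
        x = f (ξ (ys t) i) (inputsOf π ys t) w ∧
        c = (l (ξ (ys t) i) (inputsOf π ys t) w : EReal)
            + rvec f l ξ ys (inputsOf π ys) t i } :=
  rho_eq_sup_r_general f h l ξ hξ π ys t x
end

section
/- Assume that for every x ∈ X and u ∈ U, sup_{w ∈ W} l(x, u, w) ≥ 0, and that for every y ∈ Y the preimage h^{-1}{y} is a finite indexed set of at most M elements. Define the value iteration V_0(r, y) = max_{i=1,...,M} r^i and V_{k+1} = B V_k. Then the sequence (V_k) is pointwise non-decreasing: V_{k+1}(r, y) ≥ V_k(r, y) for all k, all r ∈ (ℝ ∪ {-∞})^M, and all y ∈ Y. -/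
open scoped BigOperators

/-- Under the positivity and finite-preimage assumptions, the value
iteration `V_0(r, y) = max_i r^i`, `V_{k+1} = B V_k` is pointwise non-decreasing. -/
theorem Vseq_nondecreasing {X U W Y : Type*} [Nonempty X] [Nonempty U] [Nonempty W]
    [Nonempty Y] {M : ℕ} (f : X → U → W → X) (h : X → Y)
    (hsurj : Function.Surjective h) (l : X → U → W → ℝ) (ξ : Y → Fin M → X)
    (pos : ∀ (x : X) (u : U), (0 : EReal) ≤ ⨆ w : W, (l x u w : EReal))
    (hξ : ∀ y : Y, Set.range (ξ y) = {x : X | h x = y})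
    (k : ℕ) (r : Fin M → EReal) (y : Y) :
    Vseq f l ξ k r y ≤ Vseq f l ξ (k + 1) r y := by
  -- auxiliary: c ≤ ⨆ w, g w + c  when 0 ≤ ⨆ w, g w
  have key : ∀ (c : EReal) (g : W → ℝ), (0 : EReal) ≤ (⨆ w, (g w : EReal)) →
      c ≤ ⨆ w, ((g w : EReal) + c) := by
    intro c g hpos
    induction c with
    | bot => exact bot_le
    | coe a =>
      set S := ⨆ w, ((g w : EReal) + (a : EReal)) with hS
      have h1 : ∀ w, (g w : EReal) ≤ S - (a : EReal) := fun w =>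
        (EReal.le_sub_iff_add_le (Or.inl (EReal.coe_ne_bot a))
          (Or.inl (EReal.coe_ne_top a))).2 (le_iSup (fun w => ((g w : EReal) + (a : EReal))) w)
      have h2 : (0 : EReal) ≤ S - (a : EReal) := le_trans hpos (iSup_le h1)
      have h3 := (EReal.le_sub_iff_add_le (Or.inl (EReal.coe_ne_bot a))
          (Or.inl (EReal.coe_ne_top a))).1 h2
      simpa using h3
    | top =>
      obtain ⟨w⟩ := ‹Nonempty W›
      refine le_trans ?_ (le_iSup _ w)
      simp [EReal.add_top_of_ne_bot (EReal.coe_ne_bot (g w))]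
  -- the base case: V 0 ≤ V 1
  have base : ∀ (r : Fin M → EReal) (y : Y),
      Vseq f l ξ 0 r y ≤ Vseq f l ξ 1 r y := by
    intro r y
    show (⨆ i, r i) ≤ Bop f l ξ (Vseq f l ξ 0) r y
    refine le_iInf fun u => iSup_le fun j => ?_
    -- for each w, find v, i witnessing the step
    have step : ∀ w : W, ((l (ξ y j) u w : EReal) + r j) ≤
        ⨆ v : Y, Vseq f l ξ 0 (gup f l ξ r v y u) v := by
      intro w
      set x' := f (ξ y j) u w with hx'
      set v := h x' with hv
      have hmem : x' ∈ Set.range (ξ v) := by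
        rw [hξ v]; exact hv.symm
      obtain ⟨i, hi⟩ := hmem
      have hg : ((l (ξ y j) u w : EReal) + r j) ≤ gup f l ξ r v y u i :=
        le_sSup ⟨j, w, hi.symm ▸ rfl, rfl⟩
      calc ((l (ξ y j) u w : EReal) + r j) ≤ gup f l ξ r v y u i := hg
        _ ≤ ⨆ i', gup f l ξ r v y u i' := le_iSup _ i
        _ = Vseq f l ξ 0 (gup f l ξ r v y u) v := rfl
        _ ≤ ⨆ v' : Y, Vseq f l ξ 0 (gup f l ξ r v' y u) v' := le_iSup (fun v' => Vseq f l ξ 0 (gup f l ξ r v' y u) v') v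
    calc r j ≤ ⨆ w : W, ((l (ξ y j) u w : EReal) + r j) :=
          key (r j) (fun w => l (ξ y j) u w) (pos (ξ y j) u)
      _ ≤ ⨆ v : Y, Vseq f l ξ 0 (gup f l ξ r v y u) v := iSup_le step
  -- monotonicity of the Bellman operator
  have mono : ∀ (V V' : (Fin M → EReal) → Y → EReal),
      (∀ r y, V r y ≤ V' r y) → ∀ r y, Bop f l ξ V r y ≤ Bop f l ξ V' r y := by
    intro V V' hVV r y
    exact iInf_mono fun u => iSup_mono fun v => hVV _ _
  induction k generalizing r y with
  | zero => exact base r y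
  | succ k ih => exact mono _ _ (fun r y => ih r y) r y
end

section
/- Assume that for every y ∈ Y the preimage h^{-1}{y} is a finite indexed set of at most M elements. The value-iteration functions V_k defined by V_0(r, y) = max_i r^i and V_{k+1} = B V_k satisfy, for every k: (i) V_k(r, y) ≤ V_k(r', y) whenever r ≤ r' componentwise, and (ii) V_k(r + 1·c, y) = V_k(r, y) + c for every c ∈ ℝ, where 1 is the all-ones vector. -/
open scoped BigOperators

/-!
Both properties are preserved by the Bellman operator. The update `g` is a supremum of
terms `l + r j`, so it is monotone in `r` and commutes with adding a real constant to every
component; `inf_u sup_v` preserves monotonicity, and it commutes with adding a real constant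
because `x ↦ x + c` is an order automorphism of `EReal`. Induction on `k` from
`V_0 = max_i r^i` concludes.
-/

namespace EReal

noncomputable def addRightOrderIso (c : ℝ) : EReal ≃o EReal :=
  Equiv.toOrderIso
    { toFun := (· + c)
      invFun := (· - c)
      left_inv := fun _ => add_sub_cancel_right
      right_inv := fun _ => sub_add_cancel }
    (fun _ _ hab => add_le_add_left hab _)
    (fun _ _ hab => sub_le_sub hab le_rfl)

@[simp]
theorem addRightOrderIso_apply (c : ℝ) (x : EReal) : addRightOrderIso c x = x + c := rfl

theorem iSup_add_coe {ι : Sort*} (g : ι → EReal) (c : ℝ) :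
    (⨆ i, g i + c) = (⨆ i, g i) + c := by
  simpa only [addRightOrderIso_apply] using ((addRightOrderIso c).map_iSup g).symm

theorem iInf_add_coe {ι : Sort*} (g : ι → EReal) (c : ℝ) :
    (⨅ i, g i + c) = (⨅ i, g i) + c := by
  simpa only [addRightOrderIso_apply] using ((addRightOrderIso c).map_iInf g).symm

theorem sSup_image_add_coe (S : Set EReal) (c : ℝ) :
    sSup ((· + (c : EReal)) '' S) = sSup S + c := by
  simpa only [sSup_image, addRightOrderIso_apply] using ((addRightOrderIso c).map_sSup S).symm

end EReal

section ValueIteration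

variable {X U W Y : Type*} {M : ℕ} (f : X → U → W → X) (l : X → U → W → ℝ)
  (ξ : Y → Fin M → X)

theorem gup_mono {r r' : Fin M → EReal} (hr : r ≤ r') (v y : Y) (u : U) :
    gup f l ξ r v y u ≤ gup f l ξ r' v y u := fun _ =>
  sSup_le fun _ ⟨j, w, hjw, hc⟩ =>
    hc ▸ (add_le_add_right (hr j) _).trans (le_sSup ⟨j, w, hjw, rfl⟩)

theorem gup_add_coe (r : Fin M → EReal) (c : ℝ) (v y : Y) (u : U) :
    gup f l ξ (fun i => r i + c) v y u = fun i => gup f l ξ r v y u i + c := by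
  funext i
  rw [gup, gup, ← EReal.sSup_image_add_coe]
  congr 1
  ext d
  constructor
  · rintro ⟨j, w, hjw, rfl⟩
    exact ⟨_, ⟨j, w, hjw, rfl⟩, add_assoc _ _ _⟩
  · rintro ⟨_, ⟨j, w, hjw, rfl⟩, rfl⟩
    exact ⟨j, w, hjw, add_assoc _ _ _⟩

variable {f l ξ}

theorem Bop_mono {V : (Fin M → EReal) → Y → EReal}
    (hV : ∀ y, Monotone fun r => V r y) (y : Y) :
    Monotone fun r => Bop f l ξ V r y := fun _ _ hr =>
  iInf_mono fun u => iSup_mono fun v => hV v (gup_mono f l ξ hr v y u)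

theorem Bop_add_coe {V : (Fin M → EReal) → Y → EReal}
    (hV : ∀ r y (c : ℝ), V (fun i => r i + c) y = V r y + c)
    (r : Fin M → EReal) (y : Y) (c : ℝ) :
    Bop f l ξ V (fun i => r i + c) y = Bop f l ξ V r y + c := by
  simp only [Bop, Bu, gup_add_coe, hV, EReal.iSup_add_coe, EReal.iInf_add_coe]

end ValueIteration

theorem Vseq_monotone_translation_general {X U W Y : Type*} {M : ℕ} (f : X → U → W → X)
    (l : X → U → W → ℝ) (ξ : Y → Fin M → X) (k : ℕ) :
    (∀ (r r' : Fin M → EReal) (y : Y), r ≤ r' → Vseq f l ξ k r y ≤ Vseq f l ξ k r' y) ∧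
    (∀ (r : Fin M → EReal) (y : Y) (c : ℝ),
      Vseq f l ξ k (fun i => r i + (c : EReal)) y = Vseq f l ξ k r y + (c : EReal)) := by
  induction k with
  | zero => exact ⟨fun _ _ _ hr => iSup_mono hr, fun r _ c => EReal.iSup_add_coe r c⟩
  | succ k ih => exact ⟨fun _ _ y hr => Bop_mono (fun y _ _ => ih.1 _ _ y) y hr,
      fun r y c => Bop_add_coe ih.2 r y c⟩

/-- Under the finite-preimage assumption, every value-iteration function
`V_k` is (i) monotone in the information state `r` and (ii) equivariant under uniform
translation: `V_k(r + 1·c, y) = V_k(r, y) + c` for every real `c`. -/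
theorem Vseq_monotone_translation {X U W Y : Type*} [Nonempty X] [Nonempty U] [Nonempty W]
    [Nonempty Y] {M : ℕ} (f : X → U → W → X) (h : X → Y)
    (hsurj : Function.Surjective h) (l : X → U → W → ℝ) (ξ : Y → Fin M → X)
    (hξ : ∀ y : Y, Set.range (ξ y) = {x : X | h x = y}) (k : ℕ) :
    (∀ (r r' : Fin M → EReal) (y : Y), r ≤ r' → Vseq f l ξ k r y ≤ Vseq f l ξ k r' y) ∧
    (∀ (r : Fin M → EReal) (y : Y) (c : ℝ),
      Vseq f l ξ k (fun i => r i + (c : EReal)) y = Vseq f l ξ k r y + (c : EReal)) :=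
  Vseq_monotone_translation_general f l ξ k
end

section
/- Assume that for every y ∈ Y the preimage h^{-1}{y} is a finite indexed set of at most M elements. Then for every k, every r ∈ ℝ^M, and every y ∈ Y, the value-iteration functions satisfy V_k(r, y) ≤ V_k(0, y) + max_{i=1,...,M} r^i. -/
open scoped BigOperators

/-
Adding the real constant `c` to every component of the information state raises `V_0` by at
most `c`, and the Bellman operator preserves this: the update `g` adds `r^j` to costs and takes
suprema, both of which commute with adding `c`, and so do the supremum over `v` and the infimum
over `u` in `B`. Induction on `k`, with `c = max_i r^i` and comparison state `0`, gives the claim.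
When `M = 0` both sides are `⊥`.
-/

lemma EReal.iInf_add_coe_le {ι : Sort*} (a : ι → EReal) (c : ℝ) :
    ⨅ i, a i + c ≤ (⨅ i, a i) + c := by
  have hc : ∀ b d : EReal, b ≤ d + c ↔ b - c ≤ d := fun b d =>
    (EReal.sub_le_iff_le_add (.inl (EReal.coe_ne_bot c)) (.inl (EReal.coe_ne_top c))).symm
  rw [hc]
  exact le_iInf fun i => (hc _ _).mp (iInf_le _ i)

section Shift

variable {X U W Y : Type*} {M : ℕ} (f : X → U → W → X) (l : X → U → W → ℝ)
  (ξ : Y → Fin M → X)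

lemma gup_le_gup_add {r s : Fin M → EReal} {c : ℝ} (hrs : ∀ j, r j ≤ s j + c)
    (v y : Y) (u : U) (i : Fin M) : gup f l ξ r v y u i ≤ gup f l ξ s v y u i + c := by
  refine sSup_le ?_
  rintro _ ⟨j, w, hjw, rfl⟩
  calc (l (ξ y j) u w : EReal) + r j
      ≤ (l (ξ y j) u w : EReal) + (s j + c) := add_le_add_right (hrs j) _
    _ = ((l (ξ y j) u w : EReal) + s j) + c := (add_assoc _ _ _).symm
    _ ≤ gup f l ξ s v y u i + c := add_le_add_left (le_sSup (by exact ⟨j, w, hjw, rfl⟩)) _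

lemma Bop_le_Bop_add {V V' : (Fin M → EReal) → Y → EReal} {c : ℝ}
    (hV : ∀ r s : Fin M → EReal, (∀ j, r j ≤ s j + c) → ∀ y, V r y ≤ V' s y + c)
    {r s : Fin M → EReal} (hrs : ∀ j, r j ≤ s j + c) (y : Y) :
    Bop f l ξ V r y ≤ Bop f l ξ V' s y + c := by
  refine le_trans (iInf_mono fun u => ?_) (EReal.iInf_add_coe_le _ c)
  refine iSup_le fun v => le_trans ?_ (add_le_add_left (le_iSup (fun v => V' _ v) v) _)
  exact hV _ _ (gup_le_gup_add f l ξ hrs v y u) v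

lemma Vseq_le_Vseq_add {c : ℝ} (k : ℕ) {r s : Fin M → EReal} (hrs : ∀ j, r j ≤ s j + c)
    (y : Y) : Vseq f l ξ k r y ≤ Vseq f l ξ k s y + c := by
  induction k generalizing r s y with
  | zero => exact iSup_le fun i => (hrs i).trans (add_le_add_left (le_iSup s i) _)
  | succ k ih => exact Bop_le_Bop_add f l ξ (fun r s hrs y => ih hrs y) hrs y

end Shift

lemma Vseq_fin_zero_eq_bot {X U W Y : Type*} [Nonempty U] (f : X → U → W → X)
    (l : X → U → W → ℝ) (ξ : Y → Fin 0 → X) (k : ℕ) (r : Fin 0 → EReal) (y : Y) :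
    Vseq f l ξ k r y = ⊥ := by
  induction k generalizing r y with
  | zero => simp [Vseq]
  | succ k ih => simp [Vseq, Bop, Bu, ih]

theorem Vseq_le_Vseq_zero_add_max_general {X U W Y : Type*} [Nonempty U] {M : ℕ}
    (f : X → U → W → X) (l : X → U → W → ℝ) (ξ : Y → Fin M → X)
    (k : ℕ) (r : Fin M → ℝ) (y : Y) :
    Vseq f l ξ k (fun i => ((r i : ℝ) : EReal)) y
      ≤ Vseq f l ξ k 0 y + ⨆ i : Fin M, ((r i : ℝ) : EReal) := by
  cases M with
  | zero => simp [Vseq_fin_zero_eq_bot f l ξ k]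
  | succ M =>
    obtain ⟨i₀, hi₀⟩ := Finite.exists_max r
    have hr : ∀ i, ((r i : ℝ) : EReal) ≤ (0 : Fin (M + 1) → EReal) i + r i₀ := fun i => by
      simpa using hi₀ i
    calc Vseq f l ξ k (fun i => ((r i : ℝ) : EReal)) y
        ≤ Vseq f l ξ k 0 y + r i₀ := Vseq_le_Vseq_add f l ξ k hr y
      _ ≤ Vseq f l ξ k 0 y + ⨆ i, ((r i : ℝ) : EReal) :=
          add_le_add_right (le_iSup (fun i => ((r i : ℝ) : EReal)) i₀) _

/-- Under the finite-preimage assumption, for every `k`, every real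
vector `r ∈ ℝ^M` and every `y ∈ Y`, `V_k(r, y) ≤ V_k(0, y) + max_i r^i`. -/
theorem Vseq_le_Vseq_zero_add_max {X U W Y : Type*} [Nonempty X] [Nonempty U] [Nonempty W]
    [Nonempty Y] {M : ℕ} (f : X → U → W → X) (h : X → Y)
    (hsurj : Function.Surjective h) (l : X → U → W → ℝ) (ξ : Y → Fin M → X)
    (hξ : ∀ y : Y, Set.range (ξ y) = {x : X | h x = y})
    (k : ℕ) (r : Fin M → ℝ) (y : Y) :
    Vseq f l ξ k (fun i => ((r i : ℝ) : EReal)) y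
      ≤ Vseq f l ξ k 0 y + ⨆ i : Fin M, ((r i : ℝ) : EReal) :=
  Vseq_le_Vseq_zero_add_max_general f l ξ k r y
end

section
/- In the setting of the linear system with uncertain dynamics (lifted state (z_t, A_t, B_t) with A_{t+1} = A_t, B_{t+1} = B_t, measurement h = z), the information-state update r_{t+1} = g(r_t, z_{t+1}, z_t, u_t) indexed by matrix pairs (A, B) ∈ 𝓜 reduces to the explicit componentwise recursion r_{t+1}^{A,B} = l(z_t, u_t, z_{t+1} - A z_t - B u_t) + r_t^{A,B}, for each (A, B) ∈ 𝓜. -/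
/-- Lifted dynamics of the linear system with uncertain dynamics:
`(z, A, B) ↦ (A z + B u + w, A, B)`. -/
noncomputable def fLin {n m : ℕ}
    (𝓜 : Finset (Matrix (Fin n) (Fin n) ℝ × Matrix (Fin n) (Fin m) ℝ))
    (x : (Fin n → ℝ) × 𝓜) (u : Fin m → ℝ) (w : Fin n → ℝ) : (Fin n → ℝ) × 𝓜 :=
  ((x.2 : Matrix (Fin n) (Fin n) ℝ × Matrix (Fin n) (Fin m) ℝ).1.mulVec x.1
      + (x.2 : Matrix (Fin n) (Fin n) ℝ × Matrix (Fin n) (Fin m) ℝ).2.mulVec u + w,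
    x.2)

/-- For the linear system with uncertain dynamics (lifted state
`(z_t, A_t, B_t)` with `A_{t+1} = A_t`, `B_{t+1} = B_t`, measurement `h = z`), the
component of the information-state update `g` indexed by `(A, B) ∈ 𝓜`, namely
`sup_{j, w} { l(z_t, u_t, w) + r^j : (z_{t+1}, (A,B)) = f((z_t, j), u_t, w) }`, reduces
to the explicit recursion
`r_{t+1}^{A,B} = l(z_t, u_t, z_{t+1} - A z_t - B u_t) + r_t^{A,B}`. -/
theorem linear_uncertain_update (n m : ℕ)
    (𝓜 : Finset (Matrix (Fin n) (Fin n) ℝ × Matrix (Fin n) (Fin m) ℝ))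
    (l : (Fin n → ℝ) → (Fin m → ℝ) → (Fin n → ℝ) → ℝ)
    (r : 𝓜 → EReal) (zt ztn : Fin n → ℝ) (ut : Fin m → ℝ) (AB : 𝓜) :
    sSup { c : EReal | ∃ (j : 𝓜) (w : Fin n → ℝ),
        (ztn, AB) = fLin 𝓜 (zt, j) ut w ∧ c = (l zt ut w : EReal) + r j }
      = (l zt ut (ztn
            - (AB : Matrix (Fin n) (Fin n) ℝ × Matrix (Fin n) (Fin m) ℝ).1.mulVec zt
            - (AB : Matrix (Fin n) (Fin n) ℝ × Matrix (Fin n) (Fin m) ℝ).2.mulVec ut)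
          : EReal) + r AB := by
  have hset : { c : EReal | ∃ (j : 𝓜) (w : Fin n → ℝ),
        (ztn, AB) = fLin 𝓜 (zt, j) ut w ∧ c = (l zt ut w : EReal) + r j }
      = {(l zt ut (ztn
            - (AB : Matrix (Fin n) (Fin n) ℝ × Matrix (Fin n) (Fin m) ℝ).1.mulVec zt
            - (AB : Matrix (Fin n) (Fin n) ℝ × Matrix (Fin n) (Fin m) ℝ).2.mulVec ut)
          : EReal) + r AB} := by
    ext c
    simp only [Set.mem_setOf_eq, Set.mem_singleton_iff]
    constructor
    · rintro ⟨j, w, heq, rfl⟩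
      have hj : AB = j := (Prod.ext_iff.mp heq).2
      subst hj
      have hz : ztn = (AB : Matrix (Fin n) (Fin n) ℝ × Matrix (Fin n) (Fin m) ℝ).1.mulVec zt
          + (AB : Matrix (Fin n) (Fin n) ℝ × Matrix (Fin n) (Fin m) ℝ).2.mulVec ut + w :=
        (Prod.ext_iff.mp heq).1
      have hw : w = ztn
            - (AB : Matrix (Fin n) (Fin n) ℝ × Matrix (Fin n) (Fin m) ℝ).1.mulVec zt
            - (AB : Matrix (Fin n) (Fin n) ℝ × Matrix (Fin n) (Fin m) ℝ).2.mulVec ut := by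
        rw [hz]; abel
      rw [hw]
    · rintro rfl
      refine ⟨AB, _, ?_, rfl⟩
      simp only [fLin, Prod.mk.injEq]
      exact ⟨by abel, trivial⟩
  rw [hset, csSup_singleton]
end
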